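/- Suppose for two games with weight matrices $(Q_i, R_{ij})$ and $(Q_i', R_{ij}')$ one sets $R_{ii}' = R_{ii}$ and $K_i' = K_i^*$, where $K_i^*$ solves the AREs of the first game with equilibrium feedback laws $F_j^* = R_{jj}^{-1}B_j^\top K_j^*$. If for each $i$, $(Q_i^* - Q_i') + \sum_{j \neq i} F_j^{*\top}(R_{ij} - R_{ij}')F_j^* = 0$, then $K_i^*$ also solves the AREs of the second game with the same feedback laws $F_i' = R_{ii}'^{-1}B_i^\top K_i' = F_i^*$ for all $i$. -/
import Mathlib


open Matrix Finset

/-- Solution characterization (Proposition 1): if `R'ᵢᵢ = Rᵢᵢ`, `K'ᵢ = Kᵢ*`, and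
`(Qᵢ* - Qᵢ') + ∑_{j ≠ i} Fⱼ*ᵀ (Rᵢⱼ - Rᵢⱼ') Fⱼ* = 0`, then `Kᵢ*` also solves the
AREs of the second game, with the same feedback laws. -/
theorem stmt_4 {n N : ℕ} {m : Fin N → ℕ}
    (A : Matrix (Fin n) (Fin n) ℝ)
    (B : (j : Fin N) → Matrix (Fin n) (Fin (m j)) ℝ)
    (Q Q' : Fin N → Matrix (Fin n) (Fin n) ℝ)
    (R R' : (i : Fin N) → (j : Fin N) → Matrix (Fin (m j)) (Fin (m j)) ℝ)
    (Kstar : (i : Fin N) → Matrix (Fin n) (Fin n) ℝ)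
    (Fstar : (j : Fin N) → Matrix (Fin (m j)) (Fin n) ℝ)
    (hF : ∀ j, Fstar j = (R j j)⁻¹ * (B j)ᵀ * Kstar j)
    (hARE : ∀ i, Aᵀ * Kstar i + Kstar i * A + Q i
        + ∑ j, (Fstar j)ᵀ * R i j * Fstar j
        - (∑ j, (Fstar j)ᵀ * (B j)ᵀ) * Kstar i
        - Kstar i * (∑ j, B j * Fstar j) = 0)
    (hRdiag : ∀ i, R' i i = R i i)
    (hQ : ∀ i, (Q i - Q' i)
        + ∑ j ∈ univ \ {i}, (Fstar j)ᵀ * (R i j - R' i j) * Fstar j = 0) :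
    (∀ j, (R' j j)⁻¹ * (B j)ᵀ * Kstar j = Fstar j) ∧
    (∀ i, Aᵀ * Kstar i + Kstar i * A + Q' i
        + ∑ j, (Fstar j)ᵀ * R' i j * Fstar j
        - (∑ j, (Fstar j)ᵀ * (B j)ᵀ) * Kstar i
        - Kstar i * (∑ j, B j * Fstar j) = 0) := by
  refine ⟨fun j => by rw [hRdiag j, ← hF j], fun i => ?_⟩
  have key : Q' i + ∑ j, (Fstar j)ᵀ * R' i j * Fstar j
      = Q i + ∑ j, (Fstar j)ᵀ * R i j * Fstar j := by
    have h := hQ i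
    have hsum : ∑ j, (Fstar j)ᵀ * (R i j - R' i j) * Fstar j
        = ∑ j ∈ univ \ {i}, (Fstar j)ᵀ * (R i j - R' i j) * Fstar j := by
      refine (Finset.sum_subset (Finset.sdiff_subset) ?_).symm
      intro x _ hx
      simp only [Finset.mem_sdiff, Finset.mem_univ, true_and, Finset.mem_singleton,
        not_not] at hx
      subst hx
      rw [hRdiag x]
      simp
    rw [← hsum] at h
    have h2 : Q i - Q' i + (∑ j, (Fstar j)ᵀ * R i j * Fstar j
        - ∑ j, (Fstar j)ᵀ * R' i j * Fstar j) = 0 := by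
      rw [← Finset.sum_sub_distrib]
      convert h using 2
      refine Finset.sum_congr rfl fun j _ => ?_
      rw [Matrix.mul_sub, Matrix.sub_mul]
    have h3 : (Q i + ∑ j, (Fstar j)ᵀ * R i j * Fstar j)
        - (Q' i + ∑ j, (Fstar j)ᵀ * R' i j * Fstar j) = 0 := by
      rw [← h2]; abel
    exact (sub_eq_zero.mp h3).symm
  have h := hARE i
  calc Aᵀ * Kstar i + Kstar i * A + Q' i + ∑ j, (Fstar j)ᵀ * R' i j * Fstar j
      - (∑ j, (Fstar j)ᵀ * (B j)ᵀ) * Kstar i - Kstar i * (∑ j, B j * Fstar j)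
      = Aᵀ * Kstar i + Kstar i * A + (Q' i + ∑ j, (Fstar j)ᵀ * R' i j * Fstar j)
      - (∑ j, (Fstar j)ᵀ * (B j)ᵀ) * Kstar i - Kstar i * (∑ j, B j * Fstar j) := by abel
    _ = 0 := by rw [key]; rw [← h]; abel
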